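/- arXiv:2210.01897 — 4 statements merged into one kernel-verified Lean document; each statement's English description precedes it below -/
import Mathlib

section
/- Let G be a q-pyramid DAG of height b. Then the pebbling number of G satisfies p(G) ≥ (q−1)(b−1). -/
universe u

variable {V : Type u}

/-- One move of the (one-color) pebble game: place a pebble on a vertex all of whose
immediate predecessors carry pebbles, or remove a pebble. -/
def PebbleStep [DecidableEq V] (E : V → V → Prop) (s t : Finset V) : Prop :=
  (∃ v, v ∉ s ∧ (∀ u, E u v → u ∈ s) ∧ t = insert v s) ∨ (∃ v ∈ s, t = s.erase v)

/-- A complete pebbling schedule, given by its list of configurations, starting from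
no pebbles, in which every vertex is pebbled at least once. -/
def IsPebbling [DecidableEq V] (E : V → V → Prop) (φ : List (Finset V)) : Prop :=
  φ.head? = some (∅ : Finset V) ∧ List.Chain' (PebbleStep E) φ ∧ ∀ v : V, ∃ s ∈ φ, v ∈ s

/-- Maximum number of pebbles simultaneously on the DAG. -/
def maxPebbles [DecidableEq V] (φ : List (Finset V)) : ℕ :=
  (φ.map Finset.card).foldr max 0

/-- The pebbling number of a DAG. -/
noncomputable def pebblingNumber [DecidableEq V] (E : V → V → Prop) : ℕ :=
  sInf {m | ∃ φ : List (Finset V), IsPebbling E φ ∧ maxPebbles φ ≤ m}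

/-- Vertices of the `q`-pyramid DAG of height `b`: `v_{i,j}` for `1 ≤ i ≤ b`,
`1 ≤ j ≤ (q-1)(b-i)+1`. -/
abbrev PyrV (q b : ℕ) : Type :=
  {p : ℕ × ℕ // 1 ≤ p.1 ∧ p.1 ≤ b ∧ 1 ≤ p.2 ∧ p.2 ≤ (q - 1) * (b - p.1) + 1}

/-- Edges of the `q`-pyramid DAG of height `b`: the immediate predecessors of `v_{i,j}`
are `v_{i-1,j}, …, v_{i-1,j+q-1}`. -/
def PyrE (q b : ℕ) (u v : PyrV q b) : Prop :=
  v.1.1 = u.1.1 + 1 ∧ v.1.2 ≤ u.1.2 ∧ u.1.2 ≤ v.1.2 + (q - 1)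

/-!
Put `r = q - 1` and give `v_{i,j}` the coordinates `(i, j)`. The ray of slope `σ ≤ r` below
`(i, j)` consists of the points `(i - d, j + σ d)`, `d ≥ 1`, and the cone below `(i, j)` of the
points `(i - d, j')` with `j ≤ j' ≤ j + r d`, `d ≥ 1`.

By induction on the level `i + 2` of a vertex `v` placed at time `T + 1`: there is a time `m ≤ T`
with at least `r (i + 1)` pebbles in the cone below `v`, such that every ray below `v` carries a
pebble at each time in `[m, T]`. The `r + 1` predecessors `p_k` of `v` are pebbled at time `T`;
let `p_κ` be the one whose rays have been blocked for the shortest time (up to its own last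
placement), and take `m` from the induction hypothesis for `p_κ`. At time `m` each other `p_k`
is still pebbled or has a blocked ray, the vertical one if `k < κ`, the steepest one if `k > κ`.
These `r` pebbles are distinct and lie outside the cone of `p_κ`; and since a free ray of `v`
continues a free ray of one of its predecessors, the rays of `v` are blocked on `[m, T]` as well.
At the apex this gives `r (b - 1)` pebbles at one time.
-/

section PebbleGame

variable [DecidableEq V] {E : V → V → Prop}

theorem PebbleStep.pred_mem {s t : Finset V} {u v : V} (h : PebbleStep E s t) (hvs : v ∉ s)
    (hvt : v ∈ t) (huv : E u v) : u ∈ s := by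
  rcases h with ⟨w, -, hw, rfl⟩ | ⟨w, -, rfl⟩
  · rcases Finset.mem_insert.1 hvt with rfl | hv
    · exact hw u huv
    · exact absurd hv hvs
  · exact absurd (Finset.mem_of_mem_erase hvt) hvs

theorem pred_mem_getD {φ : List (Finset V)} (hφ : List.IsChain (PebbleStep E) φ) {t : ℕ}
    {u v : V} (hvs : v ∉ φ.getD t ∅) (hvt : v ∈ φ.getD (t + 1) ∅) (huv : E u v) :
    u ∈ φ.getD t ∅ := by
  by_cases ht : t + 1 < φ.length
  · simp only [List.getD_eq_getElem?_getD, List.getElem?_eq_getElem ht,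
      List.getElem?_eq_getElem (Nat.lt_of_succ_lt ht), Option.getD_some] at hvs hvt ⊢
    exact (List.isChain_iff_getElem.1 hφ t ht).pred_mem hvs hvt huv
  · simp [List.getD_eq_getElem?_getD, List.getElem?_eq_none (Nat.not_lt.1 ht)] at hvt

theorem card_le_maxPebbles {φ : List (Finset V)} {s : Finset V} (hs : s ∈ φ) :
    s.card ≤ maxPebbles φ := by
  induction φ with
  | nil => simp at hs
  | cons a φ ih =>
    rcases List.mem_cons.1 hs with rfl | hs
    · exact le_max_left _ _
    · exact (ih hs).trans (le_max_right _ _)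

theorem card_getD_le_maxPebbles (φ : List (Finset V)) (t : ℕ) :
    (φ.getD t ∅).card ≤ maxPebbles φ := by
  rcases lt_or_ge t φ.length with ht | ht
  · rw [List.getD_eq_getElem _ _ ht]
    exact card_le_maxPebbles (List.getElem_mem ht)
  · simp [List.getElem?_eq_none ht]

theorem exists_isPebbling_of_rank [Finite V] (rank : V → ℕ)
    (hrank : ∀ u v, E u v → rank u < rank v) : ∃ φ, IsPebbling E φ := by
  have := Fintype.ofFinite V
  suffices h : ∀ S : Finset V, (∀ v ∈ S, ∀ u, E u v → u ∈ S) →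
      ∃ φ, (φ ++ [S]).head? = some ∅ ∧ List.IsChain (PebbleStep E) (φ ++ [S]) by
    obtain ⟨φ, hhead, hchain⟩ := h Finset.univ (fun _ _ _ _ => Finset.mem_univ _)
    exact ⟨φ ++ [Finset.univ], hhead, hchain, fun v => ⟨_, by simp, Finset.mem_univ v⟩⟩
  intro S
  induction S using Finset.induction_on_max_value rank with
  | empty => exact fun _ => ⟨[], rfl, List.isChain_singleton _⟩
  | insert a S haS hmax ih =>
    intro hclosed
    have hpred : ∀ u, E u a → u ∈ S := fun u hu =>
      (Finset.mem_insert.1 (hclosed a (Finset.mem_insert_self a S) u hu)).resolve_left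
        (fun h => (hrank u a hu).ne (congrArg rank h))
    obtain ⟨φ, hhead, hchain⟩ := ih fun v hv u huv =>
      (Finset.mem_insert.1 (hclosed v (Finset.mem_insert_of_mem hv) u huv)).resolve_left
        (fun h => (hrank u v huv).not_ge (h ▸ hmax v hv))
    refine ⟨φ ++ [S], by rw [List.head?_append, hhead]; rfl,
      hchain.append (List.isChain_singleton _) fun x hx y hy => ?_⟩
    simp only [List.getLast?_append, List.getLast?_singleton, Option.some_or,
      Option.mem_def, Option.some.injEq, List.head?_cons] at hx hy
    subst hx hy
    exact Or.inl ⟨a, haS, hpred, rfl⟩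

theorem le_pebblingNumber {n : ℕ} (hex : ∃ φ, IsPebbling E φ)
    (h : ∀ φ, IsPebbling E φ → n ≤ maxPebbles φ) : n ≤ pebblingNumber E := by
  obtain ⟨φ, hφ⟩ := hex
  exact le_csInf ⟨_, φ, hφ, le_rfl⟩ fun m ⟨ψ, hψ, hm⟩ => (h ψ hψ).trans hm

end PebbleGame

section LastTime

open Classical in
noncomputable def lastUnpebbled {α : Type*} (c : ℕ → Finset α) (v : α) (T : ℕ) : ℕ :=
  Nat.findGreatest (fun t => v ∉ c t) T

theorem Nat.findGreatest_lt_of_not {P : ℕ → Prop} [DecidablePred P] {n : ℕ} (h0 : P 0)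
    (hn : ¬P n) : Nat.findGreatest P n < n :=
  (Nat.findGreatest_le n).lt_of_ne fun h => hn (h ▸ Nat.findGreatest_spec (Nat.zero_le n) h0)

variable {α : Type*} {c : ℕ → Finset α} {v : α} {t T : ℕ}

theorem le_lastUnpebbled (htT : t ≤ T) (hv : v ∉ c t) : t ≤ lastUnpebbled c v T := by
  classical
  exact Nat.le_findGreatest htT hv

theorem mem_of_lastUnpebbled_lt (ht : lastUnpebbled c v T < t) (htT : t ≤ T) : v ∈ c t := by
  classical
  exact not_not.1 (Nat.findGreatest_is_greatest ht htT)

theorem lastUnpebbled_lt (hc0 : c 0 = ∅) (hv : v ∈ c T) : lastUnpebbled c v T < T := by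
  classical
  exact Nat.findGreatest_lt_of_not (by simp [hc0]) (not_not.2 hv)

theorem lastUnpebbled_placed (hc0 : c 0 = ∅) (hv : v ∈ c T) :
    v ∉ c (lastUnpebbled c v T) ∧ v ∈ c (lastUnpebbled c v T + 1) := by
  classical
  exact ⟨Nat.findGreatest_spec (P := fun t => v ∉ c t) (Nat.zero_le T) (by simp [hc0]),
    mem_of_lastUnpebbled_lt (Nat.lt_succ_self _) (lastUnpebbled_lt hc0 hv)⟩

end LastTime

section Rays

def ray (σ : ℕ) (v : ℕ × ℕ) : Set (ℕ × ℕ) :=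
  {w | ∃ d, 0 < d ∧ w.1 + d = v.1 ∧ w.2 = v.2 + σ * d}

def closedRay (σ : ℕ) (v : ℕ × ℕ) : Set (ℕ × ℕ) :=
  {w | ∃ d, w.1 + d = v.1 ∧ w.2 = v.2 + σ * d}

def cone (r : ℕ) (v : ℕ × ℕ) : Set (ℕ × ℕ) :=
  {w | ∃ d, 0 < d ∧ w.1 + d = v.1 ∧ v.2 ≤ w.2 ∧ w.2 ≤ v.2 + r * d}

variable {r σ τ a y z k l : ℕ}

theorem ray_subset_closedRay {v : ℕ × ℕ} : ray σ v ⊆ closedRay σ v :=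
  fun _ ⟨d, _, h1, h2⟩ => ⟨d, h1, h2⟩

theorem self_mem_closedRay (v : ℕ × ℕ) : v ∈ closedRay σ v := ⟨0, rfl, by simp⟩

theorem ray_subset_ray : ray σ (a, y + σ) ⊆ ray σ (a + 1, y) := by
  rintro w ⟨d, hd, h1, h2⟩
  simp only at h1 h2
  exact ⟨d + 1, by omega, by simp only; omega, by simp only; rw [h2]; ring⟩

theorem cone_subset_cone (hk : k ≤ r) : cone r (a, y + k) ⊆ cone r (a + 1, y) := by
  rintro w ⟨d, hd, h1, h2, h3⟩
  refine ⟨d + 1, by omega, by simp_all; omega, by simp_all; omega, ?_⟩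
  simp only at h3 ⊢
  nlinarith

theorem closedRay_subset_cone (hk : k ≤ r) (hσ : σ ≤ r) :
    closedRay σ (a, y + k) ⊆ cone r (a + 1, y) := by
  rintro w ⟨d, h1, h2⟩
  refine ⟨d + 1, by omega, by simp_all; omega, by simp_all; omega, ?_⟩
  simp only at h2 ⊢
  nlinarith [Nat.mul_le_mul_right d hσ]

theorem disjoint_closedRay_zero_cone (h : y < z) : Disjoint (closedRay 0 (a, y)) (cone r (a, z)) :=
  Set.disjoint_left.2 fun _ ⟨_, _, h1⟩ ⟨_, _, _, h2, _⟩ => by simp_all; omega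

theorem disjoint_closedRay_cone (h : z < y) : Disjoint (closedRay r (a, y)) (cone r (a, z)) := by
  refine Set.disjoint_left.2 fun w ⟨d, h1, h2⟩ ⟨e, _, h3, _, h4⟩ => ?_
  obtain rfl : d = e := by simp_all; omega
  simp_all; omega

theorem disjoint_closedRay (hkl : k < l) (hστ : σ ≤ τ) :
    Disjoint (closedRay σ (a, y + k)) (closedRay τ (a, y + l)) := by
  refine Set.disjoint_left.2 fun w ⟨d, h1, h2⟩ ⟨e, h3, h4⟩ => ?_
  obtain rfl : d = e := by simp_all; omega
  simp only at h2 h4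
  nlinarith [Nat.mul_le_mul_right d hστ]

end Rays

section Schedule

variable {r : ℕ} {c : ℕ → Finset (ℕ × ℕ)}

def RayFree (c : ℕ → Finset (ℕ × ℕ)) (r : ℕ) (v : ℕ × ℕ) (t : ℕ) : Prop :=
  ∃ σ ≤ r, ∀ w ∈ c t, w ∉ ray σ v

open Classical in
noncomputable def lastRayFree (c : ℕ → Finset (ℕ × ℕ)) (r : ℕ) (v : ℕ × ℕ)
    (T : ℕ) : ℕ :=
  Nat.findGreatest (RayFree c r v) T

theorem le_lastRayFree {v : ℕ × ℕ} {t T : ℕ} (htT : t ≤ T) (h : RayFree c r v t) :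
    t ≤ lastRayFree c r v T := by
  classical
  exact Nat.le_findGreatest htT h

theorem lastRayFree_le (v : ℕ × ℕ) (T : ℕ) : lastRayFree c r v T ≤ T := by
  classical
  exact Nat.findGreatest_le T

theorem not_rayFree_of_lastRayFree_lt {v : ℕ × ℕ} {t T : ℕ} (ht : lastRayFree c r v T < t)
    (htT : t ≤ T) : ¬RayFree c r v t := by
  classical
  exact Nat.findGreatest_is_greatest ht htT

theorem rayFree_lastRayFree (hc0 : c 0 = ∅) (v : ℕ × ℕ) (T : ℕ) :
    RayFree c r v (lastRayFree c r v T) := by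
  classical
  exact Nat.findGreatest_spec (Nat.zero_le T) ⟨0, Nat.zero_le r, by simp [hc0]⟩

theorem lastRayFree_lt (hc0 : c 0 = ∅) {v : ℕ × ℕ} {T : ℕ} (h : ¬RayFree c r v T) :
    lastRayFree c r v T < T := by
  classical
  exact Nat.findGreatest_lt_of_not ⟨0, Nat.zero_le r, by simp [hc0]⟩ h

theorem exists_lastRayFree_le (hc0 : c 0 = ∅) (a y T : ℕ) :
    ∃ σ ≤ r, lastRayFree c r (a + 1, y) T ≤
      lastRayFree c r (a, y + σ) (lastUnpebbled c (a, y + σ) T) := by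
  obtain ⟨σ, hσ, hfree⟩ := rayFree_lastRayFree hc0 (a + 1, y) T
  refine ⟨σ, hσ, le_lastRayFree ?_
    ⟨σ, hσ, fun w hw hray => hfree w hw (ray_subset_ray hray)⟩⟩
  exact le_lastUnpebbled (lastRayFree_le _ T) fun h => hfree _ h ⟨1, one_pos, rfl, by simp⟩

theorem exists_mem_closedRay {p : ℕ × ℕ} {σ m T : ℕ} (hmT : m ≤ T)
    (hm : lastRayFree c r p (lastUnpebbled c p T) < m) (hσ : σ ≤ r) :
    ∃ w ∈ c m, w ∈ closedRay σ p := by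
  by_cases hs : lastUnpebbled c p T < m
  · exact ⟨p, mem_of_lastUnpebbled_lt hs hmT, self_mem_closedRay p⟩
  · have hblocked := not_rayFree_of_lastRayFree_lt hm (not_lt.1 hs)
    simp only [RayFree, not_exists, not_and, not_forall, not_not] at hblocked
    obtain ⟨w, hw, hray⟩ := hblocked σ hσ
    exact ⟨w, hw, ray_subset_closedRay hray⟩

structure IsPyramidSchedule (r : ℕ) (c : ℕ → Finset (ℕ × ℕ)) : Prop where
  initial : c 0 = ∅
  pred_mem : ∀ t i j, (i + 2, j) ∉ c t → (i + 2, j) ∈ c (t + 1) →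
    ∀ k ≤ r, (i + 1, j + k) ∈ c t

def LargeConfigBefore (c : ℕ → Finset (ℕ × ℕ)) (r i x T : ℕ) : Prop :=
  ∃ m ≤ T, lastRayFree c r (i + 2, x) T < m ∧
    ∃ A ⊆ c m, (A : Set (ℕ × ℕ)) ⊆ cone r (i + 2, x) ∧ r * (i + 1) ≤ A.card

theorem IsPyramidSchedule.largeConfigBefore_zero (hc : IsPyramidSchedule r c) {x T : ℕ}
    (h1 : (2, x) ∉ c T) (h2 : (2, x) ∈ c (T + 1)) : LargeConfigBefore c r 0 x T := by
  have hpred := hc.pred_mem T 0 x h1 h2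
  refine ⟨T, le_rfl, lastRayFree_lt hc.initial ?_, (Finset.range r).image fun k => (1, x + k),
    ?_, ?_, ?_⟩
  · simp only [RayFree, not_exists, not_and, not_forall, not_not]
    exact fun σ hσ => ⟨_, hpred σ hσ, 1, one_pos, rfl, by simp⟩
  · simp only [Finset.image_subset_iff, Finset.mem_range]
    exact fun k hk => hpred k hk.le
  · simp only [Finset.coe_image, Finset.coe_range, Set.image_subset_iff]
    exact fun k hk => ⟨1, one_pos, rfl, by simp, by simp at hk ⊢; omega⟩
  · rw [Finset.card_image_of_injective _ fun k l h => by simpa using h, Finset.card_range]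
    omega

theorem exists_guard_pebbles {a y κ m T : ℕ} (hκ : κ ≤ r) (hmT : m ≤ T)
    (hm : ∀ k ≤ r, lastRayFree c r (a, y + k) (lastUnpebbled c (a, y + k) T) < m) :
    ∃ B ⊆ c m, Disjoint (B : Set (ℕ × ℕ)) (cone r (a, y + κ)) ∧
      (B : Set (ℕ × ℕ)) ⊆ cone r (a + 1, y) ∧ r ≤ B.card := by
  set slope : ℕ → ℕ := fun k => if k < κ then 0 else r
  have hslope : ∀ k, slope k ≤ r := fun k => by simp only [slope]; split_ifs <;> omega
  have hmono : ∀ k l, k < l → slope k ≤ slope l := fun k l _ => by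
    simp only [slope]; split_ifs <;> omega
  set S := (Finset.range (r + 1)).erase κ
  have hS : ∀ k ∈ S, k ≠ κ ∧ k ≤ r := fun k hk => by
    simp only [S, Finset.mem_erase, Finset.mem_range] at hk; omega
  have hwit : ∀ k ∈ S, ∃ w ∈ c m, w ∈ closedRay (slope k) (a, y + k) := fun k hk =>
    exists_mem_closedRay hmT (hm k (hS k hk).2) (hslope k)
  choose! w hwc hwray using hwit
  have hinj : Set.InjOn w S := by
    intro k hk l hl hkl
    by_contra hne
    rcases Nat.lt_or_gt_of_ne hne with h | h
    · exact Set.disjoint_left.1 (disjoint_closedRay h (hmono k l h)) (hwray k hk)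
        (hkl ▸ hwray l hl)
    · exact Set.disjoint_left.1 (disjoint_closedRay h (hmono l k h)) (hwray l hl)
        (hkl ▸ hwray k hk)
  refine ⟨S.image w, Finset.image_subset_iff.2 hwc, ?_, ?_, ?_⟩
  · rw [Finset.coe_image, Set.disjoint_image_left]
    refine Set.disjoint_left.2 fun k hk => ?_
    have hray := hwray k hk
    rcases Nat.lt_or_gt_of_ne (hS k hk).1 with h | h
    · simp only [slope, if_pos h] at hray
      exact Set.disjoint_left.1 (disjoint_closedRay_zero_cone (by omega)) hray
    · simp only [slope, if_neg (by omega : ¬k < κ)] at hray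
      exact Set.disjoint_left.1 (disjoint_closedRay_cone (by omega)) hray
  · rw [Finset.coe_image, Set.image_subset_iff]
    exact fun k hk => closedRay_subset_cone (hS k hk).2 (hslope k) (hwray k hk)
  · rw [Finset.card_image_of_injOn hinj, Finset.card_erase_of_mem (by simp; omega),
      Finset.card_range, Nat.add_sub_cancel]

theorem IsPyramidSchedule.largeConfigBefore_succ (hc : IsPyramidSchedule r c) {i x T : ℕ}
    (ih : ∀ x T, (i + 2, x) ∉ c T → (i + 2, x) ∈ c (T + 1) → LargeConfigBefore c r i x T)
    (h1 : (i + 3, x) ∉ c T) (h2 : (i + 3, x) ∈ c (T + 1)) :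
    LargeConfigBefore c r (i + 1) x T := by
  set e : ℕ → ℕ := fun k => lastRayFree c r (i + 2, x + k) (lastUnpebbled c (i + 2, x + k) T)
  have hpT : ∀ k ≤ r, (i + 2, x + k) ∈ c T := hc.pred_mem T (i + 1) x h1 h2
  obtain ⟨κ, hκ, hκmax⟩ := (Finset.range (r + 1)).exists_max_image e ⟨0, by simp⟩
  have hκr : κ ≤ r := Nat.lt_succ_iff.1 (Finset.mem_range.1 hκ)
  have hemax : ∀ k ≤ r, e k ≤ e κ := fun k hk => hκmax k (Finset.mem_range.2 (by omega))
  obtain ⟨hs1, hs2⟩ := lastUnpebbled_placed hc.initial (hpT κ hκr)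
  obtain ⟨m, hms, hem, A, hAc, hAcone, hAcard⟩ := ih (x + κ) _ hs1 hs2
  have hmT : m ≤ T := hms.trans (lastUnpebbled_lt hc.initial (hpT κ hκr)).le
  obtain ⟨B, hBc, hBdisj, hBcone, hBcard⟩ :=
    exists_guard_pebbles hκr hmT fun k hk => (hemax k hk).trans_lt hem
  refine ⟨m, hmT, ?_, A ∪ B, Finset.union_subset hAc hBc, ?_, ?_⟩
  · obtain ⟨σ, hσ, hle⟩ := exists_lastRayFree_le (r := r) hc.initial (i + 2) x T
    exact hle.trans_lt ((hemax σ hσ).trans_lt hem)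
  · rw [Finset.coe_union, Set.union_subset_iff]
    exact ⟨hAcone.trans (cone_subset_cone hκr), hBcone⟩
  · rw [Finset.card_union_of_disjoint (Finset.disjoint_coe.1 (hBdisj.mono_right hAcone).symm)]
    linarith

theorem IsPyramidSchedule.largeConfigBefore (hc : IsPyramidSchedule r c) (i : ℕ) :
    ∀ x T, (i + 2, x) ∉ c T → (i + 2, x) ∈ c (T + 1) → LargeConfigBefore c r i x T := by
  induction i with
  | zero => exact fun _ _ => hc.largeConfigBefore_zero
  | succ i ih => exact fun _ _ => hc.largeConfigBefore_succ ih

end Schedule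

section Pyramid

instance (q b : ℕ) : Finite (PyrV q b) :=
  Set.Finite.to_subtype <| (Set.finite_Icc (1, 1) (b, (q - 1) * (b - 1) + 1)).subset
    fun p ⟨h1, h2, h3, h4⟩ => by
      have : (q - 1) * (b - p.1) ≤ (q - 1) * (b - 1) := Nat.mul_le_mul_left _ (by omega)
      simp only [Set.mem_Icc, Prod.le_def]
      omega

/-- The configurations of `φ` in coordinates, extended by empty configurations after its end. -/
def coordSchedule {q b : ℕ} (φ : List (Finset (PyrV q b))) (t : ℕ) : Finset (ℕ × ℕ) :=
  (φ.getD t ∅).map (Function.Embedding.subtype _)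

theorem IsPebbling.isPyramidSchedule {q b : ℕ} {φ : List (Finset (PyrV q b))}
    (hφ : IsPebbling (PyrE q b) φ) : IsPyramidSchedule (q - 1) (coordSchedule φ) := by
  refine ⟨?_, fun t i j h1 h2 k hk => ?_⟩
  · obtain ⟨hhead, -⟩ := hφ
    cases φ <;> simp_all [coordSchedule]
  obtain ⟨⟨⟨_, j⟩, hvb⟩, hv, hveq⟩ := Finset.mem_map.1 h2
  simp only [Function.Embedding.subtype_apply, Prod.mk.injEq] at hveq
  obtain ⟨rfl, rfl⟩ := hveq
  have hv' : ⟨(i + 2, j), hvb⟩ ∉ φ.getD t ∅ := fun h =>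
    h1 (Finset.mem_map.2 ⟨_, h, rfl⟩)
  have hlevel : (q - 1) * (b - (i + 1)) = (q - 1) * (b - (i + 2)) + (q - 1) := by
    rw [show b - (i + 1) = b - (i + 2) + 1 by omega, mul_add_one]
  let u : PyrV q b := ⟨(i + 1, j + k), by simp only at hvb ⊢; omega⟩
  have hedge : PyrE q b u ⟨(i + 2, j), hvb⟩ := ⟨rfl, by simp [u], by simp [u]; omega⟩
  exact Finset.mem_map.2 ⟨u, pred_mem_getD hφ.2.1 hv' hv hedge, rfl⟩

theorem le_maxPebbles_of_isPebbling {q n : ℕ} {φ : List (Finset (PyrV q (n + 2)))}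
    (hφ : IsPebbling (PyrE q (n + 2)) φ) : (q - 1) * (n + 1) ≤ maxPebbles φ := by
  have hc := hφ.isPyramidSchedule
  obtain ⟨s, hs, hapex⟩ := hφ.2.2 ⟨(n + 2, 1), by omega, le_rfl, le_rfl, by omega⟩
  obtain ⟨t, ht, rfl⟩ := List.getElem_of_mem hs
  have hmem : (n + 2, 1) ∈ coordSchedule φ t :=
    Finset.mem_map.2 ⟨_, by rwa [List.getD_eq_getElem _ _ ht], rfl⟩
  obtain ⟨h1, h2⟩ := lastUnpebbled_placed hc.initial hmem
  obtain ⟨m, -, -, A, hA, -, hcard⟩ := hc.largeConfigBefore n 1 _ h1 h2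
  calc (q - 1) * (n + 1) ≤ A.card := hcard
    _ ≤ (coordSchedule φ m).card := Finset.card_le_card hA
    _ = (φ.getD m ∅).card := Finset.card_map _
    _ ≤ maxPebbles φ := card_getD_le_maxPebbles φ m

end Pyramid

theorem stmt_5_general (q b : ℕ) :
    (q - 1) * (b - 1) ≤ pebblingNumber (PyrE q b) := by
  rcases Nat.lt_or_ge b 2 with hb | hb
  · simp [Nat.sub_eq_zero_of_le (by omega : b ≤ 1)]
  obtain ⟨n, rfl⟩ : ∃ n, b = n + 2 := ⟨b - 2, by omega⟩
  refine le_pebblingNumber (exists_isPebbling_of_rank (fun v => v.1.1) fun _ _ h => ?_)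
    fun _ hφ => le_maxPebbles_of_isPebbling hφ
  rw [h.1]
  exact Nat.lt_succ_self _

theorem stmt_5 (q b : ℕ) (hq : 1 ≤ q) :
    (q - 1) * (b - 1) ≤ pebblingNumber (PyrE q b) :=
  stmt_5_general q b
end

section
/- Let G be a complete q-tree DAG with q^i leaves (i ≥ 0, q ≥ 2). Then the pebbling number of G satisfies p(G) ≥ (q−1)·i, i.e., p(G) ≥ (q−1)·log_q(q^i). -/
universe u

variable {V : Type u}

/-- Vertices of the complete `q`-tree with `q ^ i` leaves: depth `d` has `q ^ d` vertices. -/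
abbrev TreeV (q i : ℕ) : Type := Σ d : Fin (i + 1), Fin (q ^ (d : ℕ))

/-- Edges of the complete `q`-tree, directed toward the root (depth `0`):
the vertex at depth `d+1` with index `j` points to the vertex at depth `d` with index `j / q`. -/
def TreeE (q i : ℕ) (u v : TreeV q i) : Prop :=
  (u.1 : ℕ) = (v.1 : ℕ) + 1 ∧ (u.2 : ℕ) / q = (v.2 : ℕ)

/-!
Let `v` have height `h`, and suppose its subtree is free of pebbles at time `s` while `v` carries
a pebble at a later time `t`. Just before `v` is first pebbled after `s`, all `q` children of `v`
carry pebbles. For each child take the last moment before that at which its subtree was empty, and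
let `j₀` be the child for which this moment is latest. By induction, the subtree of `j₀` carries
`(q - 1) (h - 1) + 1` pebbles at some later moment, and at that moment none of the other `q - 1`
child subtrees is empty, so the subtree of `v` carries `(q - 1) h + 1` pebbles. Applied to the
root, which every complete pebbling must pebble, this gives the bound. Since `sInf ∅ = 0`, one also
needs some complete pebbling to exist: pebble the vertices one by one by decreasing depth.
-/

open Finset

lemma Nat.exists_last_before {P : ℕ → Prop} {s t : ℕ} (hst : s ≤ t) (hs : P s) (ht : ¬P t) :
    ∃ e, s ≤ e ∧ e < t ∧ P e ∧ ∀ r, e < r → r ≤ t → ¬P r := by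
  induction t, hst using Nat.le_induction with
  | base => exact absurd hs ht
  | succ t hst ih =>
    by_cases hPt : P t
    · exact ⟨t, hst, by omega, hPt, fun r h₁ h₂ => by rwa [show r = t + 1 by omega]⟩
    · obtain ⟨e, hse, het, hPe, hlast⟩ := ih hPt
      refine ⟨e, hse, by omega, hPe, fun r h₁ h₂ => ?_⟩
      obtain h₂ | rfl := Nat.lt_or_eq_of_le h₂
      · exact hlast r h₁ (by omega)
      · exact ht

lemma add_card_sub_one_le_sum {ι : Type*} [Fintype ι] [DecidableEq ι] {f : ι → ℕ} {a : ℕ}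
    {j₀ : ι} (h₀ : a ≤ f j₀) (h : ∀ j ≠ j₀, 1 ≤ f j) :
    a + (Fintype.card ι - 1) ≤ ∑ j, f j := by
  rw [← add_sum_erase _ _ (mem_univ j₀)]
  have : Fintype.card ι - 1 ≤ ∑ j ∈ univ.erase j₀, f j := by
    simpa using card_nsmul_le_sum (univ.erase j₀) f 1 fun j hj => h j (ne_of_mem_erase hj)
  omega

lemma Nat.mul_add_div_of_lt {a j q : ℕ} (hj : j < q) : (a * q + j) / q = a := by
  rw [Nat.add_comm, Nat.add_mul_div_right _ _ (by omega), Nat.div_eq_of_lt hj, zero_add]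

section PebbleGame

variable [DecidableEq V] {E : V → V → Prop}

lemma PebbleStep.forall_mem_of_notMem_of_mem {s t : Finset V} {v : V} (h : PebbleStep E s t)
    (hs : v ∉ s) (ht : v ∈ t) : ∀ u, E u v → u ∈ s := by
  rcases h with ⟨w, -, hw, rfl⟩ | ⟨w, -, rfl⟩
  · obtain rfl | hv := mem_insert.1 ht
    · exact hw
    · exact absurd hv hs
  · exact absurd (mem_of_mem_erase ht) hs

lemma exists_forall_mem_of_notMem_of_mem {c : ℕ → Finset V} {s t : ℕ} {v : V}
    (hstep : ∀ n < t, PebbleStep E (c n) (c (n + 1))) (hst : s ≤ t) (hs : v ∉ c s)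
    (ht : v ∈ c t) : ∃ n, s ≤ n ∧ n < t ∧ ∀ u, E u v → u ∈ c n := by
  induction t, hst using Nat.le_induction with
  | base => exact absurd ht hs
  | succ t hst ih =>
    by_cases hv : v ∈ c t
    · obtain ⟨n, hsn, hnt, hn⟩ := ih (fun n hn => hstep n (by omega)) hv
      exact ⟨n, hsn, by omega, hn⟩
    · exact ⟨t, hst, by omega, (hstep t (by omega)).forall_mem_of_notMem_of_mem hv ht⟩

lemma isChain_scanl_insert (rank : V → ℕ) (hrank : ∀ u v, E u v → rank v < rank u)
    {L : List V} {s : Finset V} (hL : L.Nodup) (hLs : ∀ v ∈ L, v ∉ s)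
    (hcover : ∀ u, u ∈ s ∨ u ∈ L) (hsorted : L.Pairwise fun a b => rank b ≤ rank a) :
    (L.scanl (fun s v => insert v s) s).IsChain (PebbleStep E) := by
  induction L generalizing s with
  | nil => exact List.isChain_singleton _
  | cons w L ih =>
    rw [List.scanl_cons, List.isChain_cons, List.head?_scanl]
    refine ⟨?_, ih hL.of_cons ?_ ?_ (List.pairwise_cons.1 hsorted).2⟩
    · rintro _ ⟨⟩
      refine Or.inl ⟨w, hLs w List.mem_cons_self, fun u hu => ?_, rfl⟩
      have hwu := hrank u w hu
      obtain h | h := hcover u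
      · exact h
      obtain rfl | h := List.mem_cons.1 h
      · omega
      · have := (List.pairwise_cons.1 hsorted).1 u h
        omega
    · intro v hv
      simp only [mem_insert, not_or]
      exact ⟨fun h => (List.nodup_cons.1 hL).1 (h ▸ hv), hLs v (List.mem_cons_of_mem _ hv)⟩
    · intro u
      obtain h | h := hcover u
      · exact Or.inl (mem_insert_of_mem h)
      obtain rfl | h := List.mem_cons.1 h
      · exact Or.inl (mem_insert_self _ _)
      · exact Or.inr h

lemma exists_mem_scanl_insert {L : List V} {s : Finset V} {v : V} (hv : v ∈ s ∨ v ∈ L) :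
    ∃ t ∈ L.scanl (fun s v => insert v s) s, v ∈ t := by
  induction L generalizing s with
  | nil => simpa using hv
  | cons w L ih =>
    rw [List.scanl_cons]
    obtain hv | hv := hv
    · exact ⟨s, List.mem_cons_self, hv⟩
    have hv' : v ∈ insert w s ∨ v ∈ L := by
      obtain rfl | hv := List.mem_cons.1 hv
      · exact Or.inl (mem_insert_self _ _)
      · exact Or.inr hv
    obtain ⟨t, ht, hvt⟩ := ih hv'
    exact ⟨t, List.mem_cons_of_mem _ ht, hvt⟩

lemma exists_isPebbling [Fintype V] (rank : V → ℕ) (hrank : ∀ u v, E u v → rank v < rank u) :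
    ∃ φ, IsPebbling E φ := by
  let L := (univ : Finset V).toList.mergeSort fun a b => rank b ≤ rank a
  have hperm : L.Perm univ.toList := List.mergeSort_perm _ _
  have hsorted : L.Pairwise fun a b => rank b ≤ rank a := by
    simpa using List.pairwise_mergeSort (le := fun a b => rank b ≤ rank a)
      (by simp; omega) (by simp; omega) univ.toList
  refine ⟨L.scanl (fun s v => insert v s) ∅, List.head?_scanl,
    isChain_scanl_insert rank hrank (hperm.nodup_iff.2 (nodup_toList _)) (by simp)
      (fun u => Or.inr (hperm.mem_iff.2 (by simp))) hsorted,
    fun v => exists_mem_scanl_insert (Or.inr (hperm.mem_iff.2 (by simp)))⟩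

lemma le_maxPebbles {φ : List (Finset V)} {s : Finset V} (hs : s ∈ φ) : #s ≤ maxPebbles φ :=
  List.le_max_of_le' 0 (List.mem_map_of_mem hs) le_rfl

lemma le_pebblingNumber_s6 {k : ℕ} (hE : ∃ φ, IsPebbling E φ)
    (hk : ∀ φ, IsPebbling E φ → ∃ s ∈ φ, k ≤ #s) : k ≤ pebblingNumber E := by
  obtain ⟨φ₀, hφ₀⟩ := hE
  refine le_csInf ⟨maxPebbles φ₀, φ₀, hφ₀, le_rfl⟩ ?_
  rintro m ⟨φ, hφ, hm⟩
  obtain ⟨s, hs, hks⟩ := hk φ hφ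
  exact hks.trans ((le_maxPebbles hs).trans hm)

end PebbleGame

section Tree

variable {q i : ℕ}

/-- The vertices `u` from which the vertex `v` is reachable, `v` included. -/
def subtree (v : TreeV q i) : Finset (TreeV q i) :=
  {u | (v.1 : ℕ) ≤ u.1 ∧ (u.2 : ℕ) / q ^ ((u.1 : ℕ) - v.1) = v.2}

lemma mem_subtree {v u : TreeV q i} :
    u ∈ subtree v ↔ (v.1 : ℕ) ≤ u.1 ∧ (u.2 : ℕ) / q ^ ((u.1 : ℕ) - v.1) = v.2 := by
  simp [subtree]

lemma mem_subtree_self (v : TreeV q i) : v ∈ subtree v := by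
  simp [mem_subtree]

def child (v : TreeV q i) (hv : (v.1 : ℕ) < i) (j : Fin q) : TreeV q i :=
  ⟨⟨v.1 + 1, by omega⟩, ⟨v.2 * q + j, by
    have := v.2.isLt
    have := j.isLt
    simp only [pow_succ]
    nlinarith⟩⟩

lemma treeE_child (v : TreeV q i) (hv : (v.1 : ℕ) < i) (j : Fin q) :
    TreeE q i (child v hv j) v :=
  ⟨rfl, Nat.mul_add_div_of_lt j.isLt⟩

lemma mem_subtree_child {v u : TreeV q i} {hv : (v.1 : ℕ) < i} {j : Fin q} :
    u ∈ subtree (child v hv j) ↔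
      (v.1 : ℕ) + 1 ≤ u.1 ∧ (u.2 : ℕ) / q ^ ((u.1 : ℕ) - (v.1 + 1)) = v.2 * q + j :=
  mem_subtree

lemma subtree_child_subset (v : TreeV q i) (hv : (v.1 : ℕ) < i) (j : Fin q) :
    subtree (child v hv j) ⊆ subtree v := by
  intro u hu
  obtain ⟨hdepth, hindex⟩ := mem_subtree_child.1 hu
  refine mem_subtree.2 ⟨by omega, ?_⟩
  rw [show (u.1 : ℕ) - v.1 = (u.1 - (v.1 + 1)) + 1 by omega, pow_succ,
    ← Nat.div_div_eq_div_mul, hindex, Nat.mul_add_div_of_lt j.isLt]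

lemma disjoint_subtree_child (v : TreeV q i) (hv : (v.1 : ℕ) < i) {j j' : Fin q}
    (hjj' : j ≠ j') : Disjoint (subtree (child v hv j)) (subtree (child v hv j')) := by
  refine disjoint_left.2 fun u hu hu' => hjj' (Fin.ext ?_)
  have := (mem_subtree_child.1 hu).2
  have := (mem_subtree_child.1 hu').2
  omega

lemma sum_card_inter_subtree_child_le (A : Finset (TreeV q i)) (v : TreeV q i)
    (hv : (v.1 : ℕ) < i) : ∑ j, #(A ∩ subtree (child v hv j)) ≤ #(A ∩ subtree v) := by
  rw [← card_biUnion fun j _ j' _ hjj' =>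
    (disjoint_subtree_child v hv hjj').mono inter_subset_right inter_subset_right]
  exact card_le_card (biUnion_subset.2 fun j _ =>
    inter_subset_inter_left (subtree_child_subset v hv j))

end Tree

section LowerBound

variable {q i : ℕ} {c : ℕ → Finset (TreeV q i)}

lemma exists_le_card_inter_subtree (hq : 0 < q) (h : ℕ) (v : TreeV q i) (hvh : i - v.1 = h)
    {s t : ℕ} (hstep : ∀ n < t, PebbleStep (TreeE q i) (c n) (c (n + 1))) (hst : s ≤ t)
    (hs : Disjoint (c s) (subtree v)) (ht : v ∈ c t) :
    ∃ r, s < r ∧ r ≤ t ∧ (q - 1) * h + 1 ≤ #(c r ∩ subtree v) := by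
  induction h generalizing v s t with
  | zero =>
    have hst' : s ≠ t := by rintro rfl; exact disjoint_left.1 hs ht (mem_subtree_self v)
    refine ⟨t, lt_of_le_of_ne hst hst', le_rfl, ?_⟩
    simpa using card_pos.2 ⟨v, mem_inter.2 ⟨ht, mem_subtree_self v⟩⟩
  | succ h ih =>
    have hvs : v ∉ c s := fun hv => disjoint_left.1 hs hv (mem_subtree_self v)
    have hv : (v.1 : ℕ) < i := by omega
    obtain ⟨t₀, hst₀, ht₀, hpred⟩ := exists_forall_mem_of_notMem_of_mem hstep hst hvs ht
    have hchild (j : Fin q) : child v hv j ∈ c t₀ := hpred _ (treeE_child v hv j)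
    choose e hse het₀ hempty hnonempty using fun j =>
      Nat.exists_last_before (P := fun n => Disjoint (c n) (subtree (child v hv j))) hst₀
        (hs.mono_right (subtree_child_subset v hv j))
        (fun hd => disjoint_left.1 hd (hchild j) (mem_subtree_self _))
    have : Nonempty (Fin q) := ⟨⟨0, hq⟩⟩
    obtain ⟨j₀, hj₀⟩ := Finite.exists_max e
    obtain ⟨r, her, hrt₀, hcard⟩ := ih (child v hv j₀) (by simp only [child]; omega)
      (fun n hn => hstep n (by omega)) (het₀ j₀).le (hempty j₀) (hchild j₀)
    refine ⟨r, by have := hse j₀; omega, by omega, ?_⟩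
    have hpos (j : Fin q) (_ : j ≠ j₀) : 1 ≤ #(c r ∩ subtree (child v hv j)) :=
      card_pos.2 (not_disjoint_iff_nonempty_inter.1
        (hnonempty j r ((hj₀ j).trans_lt her) hrt₀))
    calc (q - 1) * (h + 1) + 1 = (q - 1) * h + 1 + (Fintype.card (Fin q) - 1) := by
          rw [Fintype.card_fin]; ring
      _ ≤ ∑ j, #(c r ∩ subtree (child v hv j)) := add_card_sub_one_le_sum hcard hpos
      _ ≤ #(c r ∩ subtree v) := sum_card_inter_subtree_child_le _ v hv

lemma exists_le_card_of_isPebbling (hq : 0 < q) {φ : List (Finset (TreeV q i))}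
    (hφ : IsPebbling (TreeE q i) φ) : ∃ s ∈ φ, (q - 1) * i ≤ #s := by
  obtain ⟨hhead, hchain, hcover⟩ := hφ
  let root : TreeV q i := ⟨0, 0, pow_pos hq _⟩
  obtain ⟨t, ht, hroot⟩ : ∃ t < φ.length, root ∈ φ.getD t ∅ := by
    obtain ⟨s, hs, hrs⟩ := hcover root
    obtain ⟨t, ht, rfl⟩ := List.getElem_of_mem hs
    exact ⟨t, ht, by rwa [List.getD_eq_getElem _ _ ht]⟩
  have h₀ : φ.getD 0 ∅ = ∅ := by cases φ <;> simp_all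
  have hstep : ∀ n < t, PebbleStep (TreeE q i) (φ.getD n ∅) (φ.getD (n + 1) ∅) := fun n hn => by
    simpa [List.getD_eq_getElem, show n < φ.length by omega, show n + 1 < φ.length by omega]
      using hchain.getElem n (by omega)
  obtain ⟨r, -, hrt, hr⟩ := exists_le_card_inter_subtree hq i root (by simp [root]) hstep
    (Nat.zero_le t) (by rw [h₀]; exact disjoint_empty_left _) hroot
  refine ⟨φ[r], List.getElem_mem _, ?_⟩
  rw [← List.getD_eq_getElem _ ∅]
  exact (Nat.le_succ _).trans (hr.trans (card_le_card inter_subset_left))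

end LowerBound

theorem stmt_6 (q i : ℕ) (hq : 2 ≤ q) :
    (q - 1) * i ≤ pebblingNumber (TreeE q i) :=
  le_pebblingNumber_s6
    (exists_isPebbling (fun v : TreeV q i => v.1) fun _ _ h => by have := h.1; omega)
    fun _ => exists_le_card_of_isPebbling (by omega)
end

section
/- Let G = (V,E) be a DAG, r a visit rule for G, v ∈ V, and let ψ be an r-sequence of G containing v. Let V′ = reach_r(v|ψ), let G′ = (V′,E′) be the sub-DAG of G induced by V′, and let r′ be defined on V′ by r′(u) = {Q∖ψ : Q ∈ r(u) and Q∖ψ ⊆ V′}, and suppose r′(u) ≠ ∅ for every u ∈ V′ so that r′ is a visit rule for G′. Then for every r′-visit ψ′ of G′: (a) the concatenation ψψ′ is an r-sequence of G; (b) for every i = 1,…,|ψ′|, B_r(ψψ′[1..i]) ⊆ B_r(ψ) ∪ B_{r′}(ψ′[1..i]); and (c) b_r(ψψ′) ≤ b_r(ψ) + b_{r′}(ψ′). -/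
universe u

variable {V : Type u}

/-- Acyclicity of an edge relation (DAG condition). -/
def Acyclic (E : V → V → Prop) : Prop := ∀ v : V, ¬ Relation.TransGen E v v

/-- Immediate predecessors of a vertex. -/
def pre (E : V → V → Prop) (v : V) : Set V := {u | E u v}

/-- Immediate successors of a vertex. -/
def suc (E : V → V → Prop) (v : V) : Set V := {u | E v u}

/-- The reverse DAG edge relation. -/
def Erev (E : V → V → Prop) : V → V → Prop := fun u v => E v u

/-- `r` is a visit rule for the DAG with edge relation `E`. -/
def VisitRule (E : V → V → Prop) (r : V → Set (Set V)) : Prop :=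
  ∀ v : V, (r v).Nonempty ∧ ∀ Q ∈ r v, Q ⊆ pre E v

/-- `ψ` is an `r`-sequence. -/
def IsRSeq (r : V → Set (Set V)) (ψ : List V) : Prop :=
  ψ.Nodup ∧ ∀ i : Fin ψ.length, ∃ Q ∈ r (ψ.get i), ∀ u ∈ Q, u ∈ ψ.take i.1

/-- `ψ` is an `r`-visit: an `r`-sequence containing all vertices. -/
def IsRVisit (r : V → Set (Set V)) (ψ : List V) : Prop :=
  IsRSeq r ψ ∧ ∀ v : V, v ∈ ψ

/-- The `r`-boundary of a sequence. -/
def boundary (r : V → Set (Set V)) (ψ : List V) : Set V :=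
  {v | v ∉ ψ ∧ ∃ Q ∈ r v, Q ≠ (∅ : Set V) ∧ ∀ u ∈ Q, u ∈ ψ}

/-- The `r`-boundary complexity of a sequence. -/
noncomputable def bnd (r : V → Set (Set V)) (ψ : List V) : ℕ :=
  (Finset.Icc 1 ψ.length).sup fun i => (boundary r (ψ.take i)).ncard

/-- Descendants of a vertex. -/
def des (E : V → V → Prop) (v : V) : Set V := {u | Relation.TransGen E v u}

/-- The `r`-enabled reach of `v` given the `r`-sequence `ψ`. -/
def reach (E : V → V → Prop) (r : V → Set (Set V)) (v : V) (ψ : List V) : Set V :=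
  {u | ∃ ψ' : List V, (∀ x ∈ ψ' ++ [u], x ∈ des E v) ∧ IsRSeq r (ψ ++ (ψ' ++ [u]))}

/-! Every `r'`-enabler of a vertex of `ψ'` is an `r`-enabler with the vertices of `ψ` removed, so
`ψ ++ ψ'` is an `r`-sequence. A vertex on the `r`-boundary after `ψ ++ ψ'[1..i]` whose enabler is
not already inside `ψ` has an enabler meeting `ψ'[1..i]`: removing `ψ` from it gives a nonempty
`r'`-enabler inside `ψ'[1..i]`, and the vertex, a successor of a vertex of the reach, can be
appended to `ψ ++ ψ'`, hence lies in the reach itself. Counting along the prefixes of `ψ ++ ψ'`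
gives the bound on boundary complexities. -/

section

variable {E : V → V → Prop} {r r' : V → Set (Set V)} {v : V} {ψ ψ' L : List V}

lemma reach_subset_des : reach E r v ψ ⊆ des E v :=
  fun u ⟨_, hdes, _⟩ => hdes u (by simp)

lemma not_mem_of_mem_reach {u : V} (hu : u ∈ reach E r v ψ) : u ∉ ψ := by
  obtain ⟨_, _, hnd, _⟩ := hu
  rw [List.nodup_append] at hnd
  exact fun hmem => hnd.2.2 u hmem u (by simp) rfl

lemma mem_des_of_mem_enabler (hr : VisitRule E r) {x q : V} {Q : Set V} (hQ : Q ∈ r x)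
    (hq : q ∈ Q) (hqv : q ∈ des E v) : x ∈ des E v :=
  Relation.TransGen.tail hqv ((hr x).2 Q hQ hq)

lemma boundary_nil : boundary r [] = ∅ := by
  ext x
  simp only [boundary, List.not_mem_nil, not_false_eq_true, true_and,
    Set.mem_ofPred_eq, Set.mem_empty_iff_false, iff_false, not_exists, not_and]
  exact fun Q _ hQ hempty => hQ (Set.eq_empty_of_forall_notMem hempty)

lemma IsRSeq.append (ha : IsRSeq r ψ) (hnd : (ψ ++ L).Nodup)
    (hL : ∀ j : Fin L.length, ∃ Q ∈ r (L.get j), ∀ u ∈ Q, u ∈ ψ ++ L.take j) :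
    IsRSeq r (ψ ++ L) := by
  refine ⟨hnd, fun i => ?_⟩
  rcases lt_or_ge i.1 ψ.length with h | h
  · obtain ⟨Q, hQ, hQs⟩ := ha.2 ⟨i.1, h⟩
    refine ⟨Q, by simpa [List.getElem_append_left h] using hQ, fun u hu => ?_⟩
    rw [List.take_append_of_le_length h.le]
    exact hQs u hu
  · have hj : i.1 - ψ.length < L.length := by
      have := i.2
      simp only [List.length_append] at this
      omega
    obtain ⟨Q, hQ, hQs⟩ := hL ⟨i.1 - ψ.length, hj⟩
    refine ⟨Q, by simpa [List.getElem_append_right h] using hQ, fun u hu => ?_⟩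
    rw [show i.1 = ψ.length + (i.1 - ψ.length) by omega, List.take_length_add_append]
    exact hQs u hu

lemma IsRSeq.concat (hψ : IsRSeq r ψ) {x : V} (hx : x ∉ ψ) {Q : Set V} (hQ : Q ∈ r x)
    (hQψ : ∀ u ∈ Q, u ∈ ψ) : IsRSeq r (ψ ++ [x]) :=
  hψ.append (hψ.1.append (List.nodup_singleton x) (by simpa using hx))
    fun j => ⟨Q, by simpa [Nat.lt_one_iff.mp j.2] using hQ, fun u hu => by simp [hQψ u hu]⟩

lemma IsRSeq.append_of_enablers_diff (hψ : IsRSeq r ψ) (hψ' : IsRSeq r' ψ')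
    (hdisj : ∀ x ∈ ψ', x ∉ ψ) (hr' : ∀ u, ∀ Q' ∈ r' u, ∃ Q ∈ r u, Q \ {x | x ∈ ψ} ⊆ Q') :
    IsRSeq r (ψ ++ ψ') := by
  refine hψ.append (hψ.1.append hψ'.1 fun a ha ha' => hdisj a ha' ha) fun j => ?_
  obtain ⟨Q', hQ', hQ'ψ'⟩ := hψ'.2 j
  obtain ⟨Q, hQ, hQQ'⟩ := hr' _ Q' hQ'
  refine ⟨Q, hQ, fun u hu => ?_⟩
  by_cases huψ : u ∈ ψ
  · exact List.mem_append_left _ huψ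
  · exact List.mem_append_right _ (hQ'ψ' u (hQQ' ⟨hu, huψ⟩))

lemma boundary_append_subset {S : Set V}
    (hr' : ∀ u, ∀ Q ∈ r u, Q \ {x | x ∈ ψ} ⊆ S → Q \ {x | x ∈ ψ} ∈ r' u)
    (hL : ∀ x ∈ L, x ∈ S) : boundary r (ψ ++ L) ⊆ boundary r ψ ∪ boundary r' L := by
  rintro x ⟨hxψL, Q, hQ, hQne, hQψL⟩
  by_cases hQψ : ∀ u ∈ Q, u ∈ ψ
  · exact Or.inl ⟨fun h => hxψL (List.mem_append_left _ h), Q, hQ, hQne, hQψ⟩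
  push Not at hQψ
  obtain ⟨q, hqQ, hqψ⟩ := hQψ
  have hQL : ∀ u ∈ Q \ {x | x ∈ ψ}, u ∈ L := fun u hu =>
    (List.mem_append.mp (hQψL u hu.1)).resolve_left hu.2
  refine Or.inr ⟨fun h => hxψL (List.mem_append_right _ h), Q \ {x | x ∈ ψ},
    hr' x Q hQ fun u hu => hL u (hQL u hu), ?_, hQL⟩
  exact Set.nonempty_iff_ne_empty.mp ⟨q, hqQ, hqψ⟩

lemma boundary_append_subset_union_reach (hr : VisitRule E r) (hseq : IsRSeq r (ψ ++ ψ'))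
    (hsub : ∀ x ∈ ψ', x ∈ reach E r v ψ) (hL : L ⊆ ψ') :
    boundary r (ψ ++ L) ⊆ boundary r ψ ∪ reach E r v ψ := by
  rintro x ⟨hxψL, Q, hQ, hQne, hQψL⟩
  by_cases hQψ : ∀ u ∈ Q, u ∈ ψ
  · exact Or.inl ⟨fun h => hxψL (List.mem_append_left _ h), Q, hQ, hQne, hQψ⟩
  right
  by_cases hxψ' : x ∈ ψ'
  · exact hsub x hxψ'
  push Not at hQψ
  obtain ⟨q, hqQ, hqψ⟩ := hQψ
  have hQψψ' : ∀ u ∈ Q, u ∈ ψ ++ ψ' :=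
    fun u hu => List.mem_append.mpr ((List.mem_append.mp (hQψL u hu)).imp_right (hL ·))
  have hxψψ' : x ∉ ψ ++ ψ' := by
    simpa [hxψ'] using fun h => hxψL (List.mem_append_left _ h)
  have hq : q ∈ reach E r v ψ :=
    hsub q (hL ((List.mem_append.mp (hQψL q hqQ)).resolve_left hqψ))
  refine ⟨ψ', fun y hy => ?_, by simpa using hseq.concat hxψψ' hQ hQψψ'⟩
  rcases List.mem_append.mp hy with hy | hy
  · exact reach_subset_des (hsub y hy)
  · rw [List.mem_singleton.mp hy]
    exact mem_des_of_mem_enabler hr hQ hqQ (reach_subset_des hq)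

lemma ncard_boundary_le_bnd : (boundary r ψ).ncard ≤ bnd r ψ := by
  by_cases hψ : ψ = []
  · simp [hψ, boundary_nil]
  · have := Finset.le_sup (f := fun i => (boundary r (ψ.take i)).ncard)
      (Finset.mem_Icc.mpr ⟨List.length_pos_iff.mpr hψ, le_rfl⟩)
    rwa [List.take_length] at this

lemma bnd_append_le {f : ℕ → ℕ}
    (h : ∀ j ∈ Finset.Icc 1 ψ'.length,
      (boundary r (ψ ++ ψ'.take j)).ncard ≤ (boundary r ψ).ncard + f j) :
    bnd r (ψ ++ ψ') ≤ bnd r ψ + (Finset.Icc 1 ψ'.length).sup f := by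
  refine Finset.sup_le fun i hi => ?_
  rw [Finset.mem_Icc, List.length_append] at hi
  rcases le_or_gt i ψ.length with hiψ | hiψ
  · rw [List.take_append_of_le_length hiψ]
    exact (Finset.le_sup (f := fun i => (boundary r (ψ.take i)).ncard)
      (Finset.mem_Icc.mpr ⟨hi.1, hiψ⟩)).trans (Nat.le_add_right _ _)
  · have hj : i - ψ.length ∈ Finset.Icc 1 ψ'.length := Finset.mem_Icc.mpr ⟨by omega, by omega⟩
    rw [show i = ψ.length + (i - ψ.length) by omega, List.take_length_add_append]
    exact (h _ hj).trans (Nat.add_le_add ncard_boundary_le_bnd (Finset.le_sup hj))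

end

theorem stmt_7_general {V : Type u} [Fintype V] (E : V → V → Prop)
    (r : V → Set (Set V)) (hr : VisitRule E r) (v : V) (ψ : List V)
    (hψ : IsRSeq r ψ) (r' : V → Set (Set V))
    (hr' : ∀ u : V, r' u = {Q' | ∃ Q ∈ r u, Q' = Q \ {x | x ∈ ψ} ∧ Q' ⊆ reach E r v ψ})
    (ψ' : List V) (hseq : IsRSeq r' ψ')
    (hsub : ∀ x ∈ ψ', x ∈ reach E r v ψ) :
    IsRSeq r (ψ ++ ψ') ∧
      (∀ i, 1 ≤ i → i ≤ ψ'.length →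
        boundary r (ψ ++ ψ'.take i) ⊆
          boundary r ψ ∪ (boundary r' (ψ'.take i) ∩ reach E r v ψ)) ∧
      bnd r (ψ ++ ψ') ≤
        bnd r ψ + (Finset.Icc 1 ψ'.length).sup
          (fun i => (boundary r' (ψ'.take i) ∩ reach E r v ψ).ncard) := by
  have hA : IsRSeq r (ψ ++ ψ') :=
    hψ.append_of_enablers_diff hseq (fun x hx => not_mem_of_mem_reach (hsub x hx))
      fun u Q' hQ' => let ⟨Q, hQ, hQQ', _⟩ := (hr' u).le hQ'; ⟨Q, hQ, hQQ'.ge⟩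
  have hrestrict : ∀ u, ∀ Q ∈ r u, Q \ {x | x ∈ ψ} ⊆ reach E r v ψ → Q \ {x | x ∈ ψ} ∈ r' u :=
    fun u Q hQ hQψ => (hr' u).ge ⟨Q, hQ, rfl, hQψ⟩
  have hB : ∀ i, boundary r (ψ ++ ψ'.take i) ⊆
      boundary r ψ ∪ (boundary r' (ψ'.take i) ∩ reach E r v ψ) := fun i => by
    rw [Set.union_inter_distrib_left]
    exact Set.subset_inter
      (boundary_append_subset hrestrict fun x hx => hsub x (List.take_subset i ψ' hx))
      (boundary_append_subset_union_reach hr hA hsub (List.take_subset i ψ'))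
  refine ⟨hA, fun i _ _ => hB i, bnd_append_le fun j _ => ?_⟩
  calc (boundary r (ψ ++ ψ'.take j)).ncard
      ≤ (boundary r ψ ∪ (boundary r' (ψ'.take j) ∩ reach E r v ψ)).ncard :=
        Set.ncard_le_ncard (hB j) (Set.toFinite _)
    _ ≤ _ := Set.ncard_union_le _ _

theorem stmt_7 {V : Type u} [Fintype V] [DecidableEq V] (E : V → V → Prop) (hG : Acyclic E)
    (r : V → Set (Set V)) (hr : VisitRule E r) (v : V) (ψ : List V)
    (hψ : IsRSeq r ψ) (hv : v ∈ ψ) (r' : V → Set (Set V))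
    (hr' : ∀ u : V, r' u = {Q' | ∃ Q ∈ r u, Q' = Q \ {x | x ∈ ψ} ∧ Q' ⊆ reach E r v ψ})
    (hr'ne : ∀ u ∈ reach E r v ψ, (r' u).Nonempty)
    (ψ' : List V) (hseq : IsRSeq r' ψ')
    (hsub : ∀ x ∈ ψ', x ∈ reach E r v ψ) (hall : ∀ x ∈ reach E r v ψ, x ∈ ψ') :
    IsRSeq r (ψ ++ ψ') ∧
      (∀ i, 1 ≤ i → i ≤ ψ'.length →
        boundary r (ψ ++ ψ'.take i) ⊆
          boundary r ψ ∪ (boundary r' (ψ'.take i) ∩ reach E r v ψ)) ∧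
      bnd r (ψ ++ ψ') ≤
        bnd r ψ + (Finset.Icc 1 ψ'.length).sup
          (fun i => (boundary r' (ψ'.take i) ∩ reach E r v ψ).ncard) :=
  stmt_7_general E r hr v ψ hψ r' hr' ψ' hseq hsub
end

section
/- Let G = (V,E) be a DAG with maximum out-degree at most d_out and topological depth ℓ (the number of edges in a longest directed path of G). Then for every visit rule r for G, there exists an r-visit ψ of G such that b_r(ψ) ≤ (d_out − 1)·ℓ + 1. -/
universe u

variable {V : Type u}

/-! Run a depth-first visit whose stack holds visited vertices, top first, so that the reversed
stack is a path. Push an unvisited successor of the top that is already enabled; if there is none,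
pop; on an empty stack start from an unvisited vertex whose predecessors are all visited (one exists
by acyclicity). Invariantly every boundary vertex is a successor of a stack vertex. A stack vertex
other than the top has a visited successor, the vertex above it, so it contributes at most
`dout - 1` boundary vertices. The stack has at most `ℓ + 1` vertices, and if it has that many its
top is a sink; either way the boundary has at most `(dout - 1) * ℓ + 1` vertices. -/

variable {E : V → V → Prop} {r : V → Set (Set V)}

lemma mem_boundary_append_singleton (hr : VisitRule E r) {ψ : List V} {w u : V}
    (hu : u ∈ boundary r (ψ ++ [w])) : E w u ∨ u ∈ boundary r ψ := by
  obtain ⟨huψ, Q, hQ, hQne, hQψ⟩ := hu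
  by_cases hwQ : w ∈ Q
  · exact .inl ((hr u).2 Q hQ hwQ)
  refine .inr ⟨fun h => huψ (List.mem_append_left _ h), Q, hQ, hQne, fun x hx => ?_⟩
  rcases List.mem_append.1 (hQψ x hx) with h | h
  · exact h
  · obtain rfl := List.mem_singleton.1 h
    exact absurd hx hwQ

lemma IsRSeq.append_singleton {ψ : List V} {w : V} (h : IsRSeq r ψ) (hw : w ∉ ψ)
    {Q : Set V} (hQ : Q ∈ r w) (hQψ : ∀ u ∈ Q, u ∈ ψ) : IsRSeq r (ψ ++ [w]) := by
  refine ⟨h.1.append (List.nodup_singleton w) (by simpa using hw), fun i => ?_⟩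
  rcases Nat.lt_or_ge i.1 ψ.length with hi | hi
  · obtain ⟨Q', hQ', hQ'ψ⟩ := h.2 ⟨i, hi⟩
    refine ⟨Q', by simpa [List.getElem_append_left hi] using hQ', fun u hu => ?_⟩
    rw [List.take_append_of_le_length hi.le]
    exact hQ'ψ u hu
  · have hi' : i.1 = ψ.length := by
      have := i.2
      simp only [List.length_append, List.length_singleton] at this
      omega
    refine ⟨Q, by simpa [hi'] using hQ, fun u hu => ?_⟩
    rw [hi', List.take_left' rfl]
    exact hQψ u hu

lemma bnd_append_singleton_le {ψ : List V} {w : V} {K : ℕ} (hψ : bnd r ψ ≤ K)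
    (hw : (boundary r (ψ ++ [w])).ncard ≤ K) : bnd r (ψ ++ [w]) ≤ K := by
  refine Finset.sup_le fun i hi => ?_
  rw [Finset.mem_Icc, List.length_append, List.length_singleton] at hi
  rcases le_or_gt i ψ.length with h | h
  · rw [List.take_append_of_le_length h]
    exact (Finset.le_sup (f := fun j => (boundary r (ψ.take j)).ncard)
      (Finset.mem_Icc.2 ⟨hi.1, h⟩)).trans hψ
  · rwa [List.take_of_length_le (by simp; omega)]

lemma Acyclic.exists_mem_forall_not_mem_pre [Finite V] (hG : Acyclic E) {s : Set V}
    (hs : s.Nonempty) : ∃ v ∈ s, ∀ u, E u v → u ∉ s := by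
  have : Std.Irrefl (Relation.TransGen E) := ⟨hG⟩
  obtain ⟨v, hv, hmin⟩ :=
    (Finite.wellFounded_of_trans_of_irrefl (Relation.TransGen E)).has_min s hs
  exact ⟨v, hv, fun u hu hus => hmin u hus (.single hu)⟩

structure IsDfsState (E : V → V → Prop) (r : V → Set (Set V)) (ψ σ : List V) : Prop where
  isRSeq : IsRSeq r ψ
  stack_subset : ∀ x ∈ σ, x ∈ ψ
  isChain_stack : σ.IsChain (fun a b => E b a)
  boundary_covered : ∀ w ∈ boundary r ψ, ∃ v ∈ σ, E v w

namespace IsDfsState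

lemma nil : IsDfsState E r [] [] where
  isRSeq := ⟨List.nodup_nil, fun i => i.elim0⟩
  stack_subset := by simp
  isChain_stack := List.isChain_nil
  boundary_covered w hw := by
    obtain ⟨-, Q, -, hQne, hQψ⟩ := hw
    exact absurd (Set.eq_empty_of_forall_notMem fun u hu => by simpa using hQψ u hu) hQne

lemma push (hr : VisitRule E r) {ψ σ : List V} {w : V} (h : IsDfsState E r ψ σ) (hw : w ∉ ψ)
    {Q : Set V} (hQ : Q ∈ r w) (hQψ : ∀ u ∈ Q, u ∈ ψ) (hσ : (w :: σ).IsChain (fun a b => E b a)) :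
    IsDfsState E r (ψ ++ [w]) (w :: σ) where
  isRSeq := h.isRSeq.append_singleton hw hQ hQψ
  stack_subset x hx := by
    rcases List.mem_cons.1 hx with rfl | hx
    · simp
    · exact List.mem_append_left _ (h.stack_subset x hx)
  isChain_stack := hσ
  boundary_covered u hu := by
    rcases mem_boundary_append_singleton hr hu with hwu | hu
    · exact ⟨w, List.mem_cons_self, hwu⟩
    · obtain ⟨v, hv, hvu⟩ := h.boundary_covered u hu
      exact ⟨v, List.mem_cons_of_mem _ hv, hvu⟩

lemma pop {ψ s : List V} {a : V} (h : IsDfsState E r ψ (a :: s))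
    (ha : ∀ w ∈ boundary r ψ, ¬ E a w) : IsDfsState E r ψ s where
  isRSeq := h.isRSeq
  stack_subset x hx := h.stack_subset x (List.mem_cons_of_mem _ hx)
  isChain_stack := h.isChain_stack.tail
  boundary_covered w hw := by
    obtain ⟨v, hv, hvw⟩ := h.boundary_covered w hw
    rcases List.mem_cons.1 hv with rfl | hv
    · exact absurd hvw (ha w hw)
    · exact ⟨v, hv, hvw⟩

end IsDfsState

section Counting

variable [Finite V] {dout : ℕ}

lemma ncard_suc_diff_le (hd : ∀ v : V, (suc E v).ncard ≤ dout) {ψ : List V} {a b : V}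
    (hab : E a b) (hb : b ∈ ψ) : (suc E a \ {x | x ∈ ψ}).ncard ≤ dout - 1 :=
  calc (suc E a \ {x | x ∈ ψ}).ncard
      ≤ (suc E a \ {b}).ncard :=
        Set.ncard_le_ncard (Set.sdiff_subset_sdiff_right (by simpa using hb)) (Set.toFinite _)
    _ = (suc E a).ncard - 1 := Set.ncard_sdiff_singleton_of_mem hab
    _ ≤ dout - 1 := Nat.sub_le_sub_right (hd a) 1

lemma ncard_unvisited_suc_stack_le (hd : ∀ v : V, (suc E v).ncard ≤ dout) {ψ : List V}
    (a : V) (s : List V) (hchain : (a :: s).IsChain (fun x y => E y x))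
    (hψ : ∀ x ∈ a :: s, x ∈ ψ) :
    {w | w ∉ ψ ∧ ∃ v ∈ a :: s, E v w}.ncard
      ≤ (suc E a \ {x | x ∈ ψ}).ncard + s.length * (dout - 1) := by
  induction s generalizing a with
  | nil =>
    refine (Set.ncard_le_ncard (t := suc E a \ {x | x ∈ ψ}) ?_ (Set.toFinite _)).trans (by simp)
    rintro w ⟨hw, v, hv, hvw⟩
    obtain rfl := List.mem_singleton.1 hv
    exact ⟨hvw, hw⟩
  | cons b s ih =>
    obtain ⟨hba, hchain⟩ := List.isChain_cons_cons.1 hchain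
    have hsub : {w | w ∉ ψ ∧ ∃ v ∈ a :: b :: s, E v w}
        ⊆ (suc E a \ {x | x ∈ ψ}) ∪ {w | w ∉ ψ ∧ ∃ v ∈ b :: s, E v w} := by
      rintro w ⟨hw, v, hv, hvw⟩
      rcases List.mem_cons.1 hv with rfl | hv
      · exact .inl ⟨hvw, hw⟩
      · exact .inr ⟨hw, v, hv, hvw⟩
    have hrest := ih b hchain fun x hx => hψ x (List.mem_cons_of_mem _ hx)
    have hb := ncard_suc_diff_le hd hba (hψ a List.mem_cons_self)
    have := (Set.ncard_le_ncard hsub (Set.toFinite _)).trans (Set.ncard_union_le _ _)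
    simp only [List.length_cons, Nat.succ_mul]
    omega

lemma IsDfsState.ncard_boundary_le {ℓ : ℕ} (hd : ∀ v : V, (suc E v).ncard ≤ dout)
    (hdepth : ∀ p : List V, p ≠ [] → p.IsChain E → p.length ≤ ℓ + 1)
    {ψ σ : List V} (h : IsDfsState E r ψ σ) : (boundary r ψ).ncard ≤ (dout - 1) * ℓ + 1 := by
  have hstack : ∀ τ : List V, τ ≠ [] → τ.IsChain (fun x y => E y x) → τ.length ≤ ℓ + 1 :=
    fun τ hτ hc => by simpa using hdepth τ.reverse (by simpa) (List.isChain_reverse.2 hc)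
  rcases σ with _ | ⟨a, s⟩
  · have : boundary r ψ = ∅ :=
      Set.eq_empty_of_forall_notMem fun w hw => by simpa using h.boundary_covered w hw
    simp [this]
  have hcount := (Set.ncard_le_ncard (t := {w | w ∉ ψ ∧ ∃ v ∈ a :: s, E v w})
    (fun w hw => ⟨hw.1, h.boundary_covered w hw⟩) (Set.toFinite _)).trans (ncard_unvisited_suc_stack_le hd a s h.isChain_stack h.stack_subset)
  have hs : s.length + 1 ≤ ℓ + 1 := by simpa using hstack _ (by simp) h.isChain_stack
  rcases hs.lt_or_eq with hs | hs
  · have htop := (Set.ncard_le_ncard (Set.sdiff_subset (t := {x | x ∈ ψ})) (Set.toFinite _)).trans (hd a)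
    have := Nat.mul_le_mul_right (dout - 1) (show s.length + 1 ≤ ℓ by omega)
    rw [add_one_mul, mul_comm ℓ] at this
    omega
  · obtain rfl : ℓ = s.length := by omega
    have hsink : suc E a = ∅ := Set.eq_empty_of_forall_notMem fun w hw => by
      have := hstack (w :: a :: s) (by simp) (List.isChain_cons_cons.2 ⟨hw, h.isChain_stack⟩)
      simp at this
    simp only [hsink, Set.empty_sdiff, Set.ncard_empty, zero_add] at hcount
    rw [mul_comm]
    exact hcount.trans (Nat.le_succ _)

end Counting

lemma ncard_unvisited_append_singleton_lt [Finite V] {ψ : List V} {w : V} (hw : w ∉ ψ) :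
    {x | x ∉ ψ ++ [w]}.ncard < {x | x ∉ ψ}.ncard :=
  Set.ncard_lt_ncard ⟨fun x hx hxψ => hx (List.mem_append_left _ hxψ),
    fun hsub => hsub hw (by simp)⟩ (Set.toFinite _)

theorem exists_isRVisit_of_isDfsState [Finite V] (hG : Acyclic E) (hr : VisitRule E r) {K : ℕ}
    (hK : ∀ ψ σ, IsDfsState E r ψ σ → (boundary r ψ).ncard ≤ K) {ψ σ : List V}
    (h : IsDfsState E r ψ σ) (hψ : bnd r ψ ≤ K) : ∃ ψ', IsRVisit r ψ' ∧ bnd r ψ' ≤ K := by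
  by_cases hall : ∀ v, v ∈ ψ
  · exact ⟨ψ, ⟨h.isRSeq, hall⟩, hψ⟩
  match σ, h with
  | [], h =>
    obtain ⟨v, hv, hpre⟩ :=
      hG.exists_mem_forall_not_mem_pre (s := {v | v ∉ ψ}) (by push Not at hall; exact hall)
    obtain ⟨Q, hQ⟩ := (hr v).1
    have h' := h.push hr hv hQ (fun u hu => not_not.1 (hpre u ((hr v).2 Q hQ hu)))
      (List.isChain_singleton v)
    exact exists_isRVisit_of_isDfsState hG hr hK h' (bnd_append_singleton_le hψ (hK _ _ h'))
  | a :: s, h =>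
    by_cases hpush : ∃ w ∈ boundary r ψ, E a w
    · obtain ⟨w, ⟨hw, Q, hQ, -, hQψ⟩, haw⟩ := hpush
      have h' := h.push hr hw hQ hQψ (List.isChain_cons_cons.2 ⟨haw, h.isChain_stack⟩)
      exact exists_isRVisit_of_isDfsState hG hr hK h' (bnd_append_singleton_le hψ (hK _ _ h'))
    · push Not at hpush
      exact exists_isRVisit_of_isDfsState hG hr hK (h.pop hpush) hψ
termination_by ({v | v ∉ ψ}.ncard, σ.length)
decreasing_by
  all_goals first
    | exact Prod.Lex.left _ _ (ncard_unvisited_append_singleton_lt (by assumption))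
    | exact Prod.Lex.right _ (by simp)

theorem stmt_8_general {V : Type u} [Fintype V] (E : V → V → Prop) (hG : Acyclic E)
    (dout ℓ : ℕ) (hd : ∀ v : V, (suc E v).ncard ≤ dout)
    (hdepth1 : ∀ p : List V, p ≠ [] → p.Chain' E → p.length ≤ ℓ + 1)
    (r : V → Set (Set V)) (hr : VisitRule E r) :
    ∃ ψ : List V, IsRVisit r ψ ∧ bnd r ψ ≤ (dout - 1) * ℓ + 1 :=
  exists_isRVisit_of_isDfsState hG hr (fun _ _ h => h.ncard_boundary_le hd hdepth1)
    IsDfsState.nil (by simp [bnd])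

theorem stmt_8 {V : Type u} [Fintype V] [DecidableEq V] (E : V → V → Prop) (hG : Acyclic E)
    (dout ℓ : ℕ) (hd : ∀ v : V, (suc E v).ncard ≤ dout)
    (hdepth1 : ∀ p : List V, p ≠ [] → p.Chain' E → p.length ≤ ℓ + 1)
    (hdepth2 : ∃ p : List V, p ≠ [] ∧ p.Chain' E ∧ p.length = ℓ + 1)
    (r : V → Set (Set V)) (hr : VisitRule E r) :
    ∃ ψ : List V, IsRVisit r ψ ∧ bnd r ψ ≤ (dout - 1) * ℓ + 1 :=
  stmt_8_general E hG dout ℓ hd hdepth1 r hr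
end
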